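/- arXiv:2603.11400 — 2 statements merged into one kernel-verified Lean document; each statement's English description precedes it below -/
import Mathlib

section
/- Let X_1, …, X_{M+1} be exchangeable real-valued random variables (in particular, this holds when they are i.i.d.). Fix δ ∈ (0,1) and set k = ⌈(M+1)(1−δ)⌉, and assume k ≤ M. Let γ be the k-th smallest value among X_1, …, X_M (the empirical k/M-quantile of the first M variables). Then P(X_{M+1} ≤ γ) ≥ 1 − δ. -/
/-!
Call the strict rank of index `j` the number of indices whose value is strictly below that of `j`.
Coverage can fail only when the test point `X_{M+1}` has strict rank `≥ k`. In any `n ≥ k` reals,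
at least `k` indices have strict rank `< k`: if some index has rank `≥ k`, the lowest-valued such
index has `k` indices below it, none of which can have rank `≥ k`. By exchangeability all `M + 1`
indices have the same probability `p` of strict rank `< k`, so `(M + 1) p ≥ k ≥ (M + 1)(1 - δ)`.
-/

open MeasureTheory

/-- The `k`-th smallest value among `v 0, …, v (M-1)` (1-indexed). -/
noncomputable def kthSmallest {M : ℕ} (v : Fin M → ℝ) (k : ℕ) : ℝ :=
  ((Multiset.sort (↑(List.ofFn v) : Multiset ℝ) (· ≤ ·)).getD (k - 1) 0)

open Finset
open scoped ENNReal

lemma List.countP_ofFn {α : Type*} {n : ℕ} (v : Fin n → α) (p : α → Prop) [DecidablePred p] :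
    (List.ofFn v).countP (fun a => decide (p a)) = #{i | p (v i)} := by
  have : (↑(List.ofFn v) : Multiset α) = univ.val.map v := by
    simp [List.ofFn_eq_map, Fin.univ_def]
  rw [← Multiset.coe_countP, this, Multiset.countP_map]
  rfl

lemma le_kthSmallest_of_card_lt {M k : ℕ} (v : Fin M → ℝ) (hkM : k ≤ M) {x : ℝ}
    (h : #{i | v i < x} < k) : x ≤ kthSmallest v k := by
  set l := Multiset.sort (↑(List.ofFn v) : Multiset ℝ) (· ≤ ·)
  have hperm : l.Perm (List.ofFn v) := Multiset.coe_eq_coe.mp (Multiset.sort_eq _ _)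
  obtain ⟨j, rfl⟩ : ∃ j, k = j + 1 := Nat.exists_eq_succ_of_ne_zero (by omega)
  have hj : j < l.length := by rw [hperm.length_eq, List.length_ofFn]; omega
  by_contra! hlt
  change l.getD (j + 1 - 1) 0 < x at hlt
  rw [Nat.add_sub_cancel, List.getD_eq_getElem l 0 hj] at hlt
  have hsorted : l.Pairwise (· ≤ ·) := Multiset.pairwise_sort _ _
  -- the first `j + 1` entries of the sorted list are all `≤ l[j] < x`
  have htake : ∀ y ∈ l.take (j + 1), decide (y < x) := by
    intro y hy
    obtain ⟨i, hi, rfl⟩ := List.mem_iff_getElem.mp hy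
    have hij : i ≤ j := by rw [List.length_take] at hi; omega
    have hle : l[i] ≤ l[j] := hsorted.rel_get_of_le (a := ⟨i, by omega⟩) (b := ⟨j, hj⟩) hij
    simpa using hle.trans_lt hlt
  have := (List.take_sublist (j + 1) l).countP_le (p := fun y => decide (y < x))
  rw [List.countP_eq_length.mpr htake, List.length_take, hperm.countP_eq, List.countP_ofFn] at this
  omega

section StrictRank

variable {ι α : Type*} [Fintype ι] [LinearOrder α]

def strictRank (f : ι → α) (j : ι) : ℕ := #{i | f i < f j}

lemma strictRank_comp_perm (f : ι → α) (σ : Equiv.Perm ι) (j : ι) :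
    strictRank (f ∘ σ) j = strictRank f (σ j) :=
  card_equiv σ (by simp)

lemma strictRank_last {n : ℕ} (f : Fin (n + 1) → α) :
    strictRank f (Fin.last n) = #{i : Fin n | f i.castSucc < f (Fin.last n)} := by
  simp only [strictRank, card_filter, Fin.sum_univ_castSucc, lt_irrefl, if_false, add_zero]

lemma le_card_strictRank_lt (f : ι → α) {k : ℕ} (hk : k ≤ Fintype.card ι) :
    k ≤ #{j | strictRank f j < k} := by
  by_cases hbad : ∃ j, k ≤ strictRank f j
  · obtain ⟨j₀, hj₀, hmin⟩ := exists_min_image {j | k ≤ strictRank f j} f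
      (by simpa [Finset.Nonempty] using hbad)
    refine (mem_filter.mp hj₀).2.trans (card_le_card fun i hi => ?_)
    simp only [mem_filter, mem_univ, true_and] at hi hmin ⊢
    by_contra! hik
    exact (hmin i hik).not_gt hi
  · push Not at hbad
    simpa [hbad] using hk

end StrictRank

lemma measurable_strictRank {ι : Type*} [Fintype ι] (j : ι) :
    Measurable fun f : ι → ℝ => strictRank f j := by
  simp only [strictRank, card_filter]
  exact Finset.measurable_sum _ fun i _ => Measurable.ite
    (measurableSet_lt (measurable_pi_apply i) (measurable_pi_apply j))
    measurable_const measurable_const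

lemma natCast_mul_measure_univ_le_sum {Ω ι : Type*} [MeasurableSpace Ω] [Fintype ι] (μ : Measure Ω)
    {A : ι → Set Ω} [∀ ω, DecidablePred fun i => ω ∈ A i] (hA : ∀ i, MeasurableSet (A i))
    {k : ℕ} (hk : ∀ ω, k ≤ #{i | ω ∈ A i}) :
    k * μ Set.univ ≤ ∑ i, μ (A i) := by
  calc k * μ Set.univ = ∫⁻ _, (k : ℝ≥0∞) ∂μ := (lintegral_const _).symm
    _ ≤ ∫⁻ ω, ∑ i, (A i).indicator 1 ω ∂μ := lintegral_mono fun ω => by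
        simpa [Set.indicator_apply, Finset.sum_boole] using hk ω
    _ = ∑ i, μ (A i) := by
        rw [lintegral_finsetSum _ fun i _ => measurable_one.indicator (hA i)]
        simp_rw [lintegral_indicator_one (hA _)]

def Exchangeable {Ω ι : Type*} [MeasurableSpace Ω] (P : Measure Ω) (X : ι → Ω → ℝ) : Prop :=
  ∀ σ : Equiv.Perm ι, P.map (fun ω i => X (σ i) ω) = P.map (fun ω i => X i ω)

namespace Exchangeable

variable {Ω ι : Type*} [MeasurableSpace Ω] {P : Measure Ω} {X : ι → Ω → ℝ}

lemma measure_perm_mem (hX : Exchangeable P X) (hmeas : ∀ i, Measurable (X i))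
    (σ : Equiv.Perm ι) {S : Set (ι → ℝ)} (hS : MeasurableSet S) :
    P {ω | (fun i => X (σ i) ω) ∈ S} = P {ω | (fun i => X i ω) ∈ S} := by
  have h := congrArg (· S) (hX σ)
  rwa [Measure.map_apply (measurable_pi_lambda _ fun i => hmeas (σ i)) hS,
    Measure.map_apply (measurable_pi_lambda _ hmeas) hS] at h

variable [Fintype ι]

lemma measure_strictRank_lt_eq (hX : Exchangeable P X) (hmeas : ∀ i, Measurable (X i))
    (k : ℕ) (j j' : ι) :
    P {ω | strictRank (X · ω) j < k} = P {ω | strictRank (X · ω) j' < k} := by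
  classical
  have h := hX.measure_perm_mem hmeas (Equiv.swap j j')
    (measurable_strictRank j (measurableSet_Iio (a := k)))
  have hrank (ω : Ω) : strictRank (fun i => X (Equiv.swap j j' i) ω) j = strictRank (X · ω) j' :=
    (strictRank_comp_perm (X · ω) _ j).trans (by rw [Equiv.swap_apply_left])
  simp only [Set.mem_preimage, Set.mem_Iio, hrank] at h
  exact h.symm

lemma natCast_le_card_mul_measure_strictRank_lt [IsProbabilityMeasure P] (hX : Exchangeable P X)
    (hmeas : ∀ i, Measurable (X i)) {k : ℕ} (hk : k ≤ Fintype.card ι) (j : ι) :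
    k ≤ Fintype.card ι * P {ω | strictRank (X · ω) j < k} := by
  have hsum := natCast_mul_measure_univ_le_sum P (A := fun i => {ω | strictRank (X · ω) i < k})
    (fun i => (measurable_strictRank i).comp (measurable_pi_lambda _ hmeas) measurableSet_Iio)
    (fun ω => le_card_strictRank_lt (X · ω) hk)
  simpa [hX.measure_strictRank_lt_eq hmeas k _ j] using hsum

end Exchangeable

theorem stmt_1_general {Ω : Type*} [MeasurableSpace Ω] (P : Measure Ω) [IsProbabilityMeasure P]
    (M : ℕ) (X : Fin (M + 1) → Ω → ℝ) (hmeas : ∀ i, Measurable (X i))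
    (hexch : ∀ σ : Equiv.Perm (Fin (M + 1)),
      Measure.map (fun ω => fun i => X (σ i) ω) P = Measure.map (fun ω => fun i => X i ω) P)
    (δ : ℝ)
    (k : ℕ) (hk : k = ⌈((M : ℝ) + 1) * (1 - δ)⌉₊) (hkM : k ≤ M) :
    ENNReal.ofReal (1 - δ) ≤
      P {ω | X (Fin.last M) ω ≤ kthSmallest (fun i : Fin M => X i.castSucc ω) k} := by
  set G := {ω | strictRank (X · ω) (Fin.last M) < k}
  have hG : G ⊆ {ω | X (Fin.last M) ω ≤ kthSmallest (fun i : Fin M => X i.castSucc ω) k} :=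
    fun ω hω => le_kthSmallest_of_card_lt _ hkM (by rwa [Set.mem_ofPred_eq, strictRank_last] at hω)
  have hcount : (k : ℝ≥0∞) ≤ (M + 1 : ℕ) * P G := by
    simpa only [Fintype.card_fin] using
      Exchangeable.natCast_le_card_mul_measure_strictRank_lt hexch hmeas
        (by rw [Fintype.card_fin]; omega) (Fin.last M)
  have hcount_real : (k : ℝ) ≤ (M + 1 : ℕ) * P.real G := by
    simpa only [ENNReal.toReal_mul, ENNReal.toReal_natCast, measureReal_def] using
      ENNReal.toReal_mono (by finiteness) hcount
  have hceil : ((M + 1 : ℕ) : ℝ) * (1 - δ) ≤ k := by push_cast; exact hk ▸ Nat.le_ceil _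
  calc ENNReal.ofReal (1 - δ) ≤ ENNReal.ofReal (P.real G) :=
        ENNReal.ofReal_le_ofReal (le_of_mul_le_mul_left (hceil.trans hcount_real) (by positivity))
    _ = P G := ofReal_measureReal
    _ ≤ _ := measure_mono hG

/-- Split conformal prediction coverage guarantee: for exchangeable real random
variables `X_1, …, X_{M+1}`, with `k = ⌈(M+1)(1-δ)⌉ ≤ M` and `γ` the `k`-th smallest
of the first `M` values, we have `P(X_{M+1} ≤ γ) ≥ 1 - δ`. -/
theorem stmt_1 {Ω : Type*} [MeasurableSpace Ω] (P : Measure Ω) [IsProbabilityMeasure P]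
    (M : ℕ) (X : Fin (M + 1) → Ω → ℝ) (hmeas : ∀ i, Measurable (X i))
    (hexch : ∀ σ : Equiv.Perm (Fin (M + 1)),
      Measure.map (fun ω => fun i => X (σ i) ω) P = Measure.map (fun ω => fun i => X i ω) P)
    (δ : ℝ) (hδ : δ ∈ Set.Ioo (0 : ℝ) 1)
    (k : ℕ) (hk : k = ⌈((M : ℝ) + 1) * (1 - δ)⌉₊) (hkM : k ≤ M) :
    ENNReal.ofReal (1 - δ) ≤
      P {ω | X (Fin.last M) ω ≤ kthSmallest (fun i : Fin M => X i.castSucc ω) k} :=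
  stmt_1_general P M X hmeas hexch δ k hk hkM
end

section
/- Let D be a finite dataset of demonstrations, each demonstration ξ a finite list of state-action pairs, all of length H. Let ℓ(s,a;θ) be twice continuously differentiable in θ, define the behavior-cloning loss L_bc(θ) = (1/(|D|·H)) ∑_{ξ∈D} ∑_{(s,a)∈ξ} ℓ(s,a;θ), and suppose θ* is a critical point of L_bc with positive-definite Hessian H_bc. Let T be a finite set of rollout trajectories with return R : T → ℝ and rollout distribution p_θ(τ) = ∏_{(s',a')∈τ} π_θ(a'|s') · (θ-independent factors), differentiable in θ with p_{θ*}(τ) > 0. Define the performance J(θ) = ∑_τ p_θ(τ) R(τ), the performance influence Ψ_π(ξ) = −∇J(θ*)^⊤ H_bc^{−1} ∇_θ [ (1/H)∑_{(s,a)∈ξ} ℓ(s,a;θ*) ], and the action influence Ψ_a((s',a'),(s,a)) = −∇_θ log π_{θ*}(a'|s')^⊤ H_bc^{−1} ∇_θ ℓ(s,a;θ*). Then Ψ_π(ξ) = E_{τ ∼ p_{θ*}} [ (R(τ)/H) ∑_{(s',a')∈τ} ∑_{(s,a)∈ξ} Ψ_a((s',a'),(s,a)) ]. -/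
open scoped RealInnerProductSpace

/-!
Since `p_θ(τ)` is a `θ`-independent factor times a product of policy probabilities, the
log-derivative trick gives `∇p_θ(τ) = p_θ(τ) ∑_{(s',a') ∈ τ} ∇ log π_θ(a'|s')`, hence
`∇J(θ*) = ∑_τ p_{θ*}(τ) R(τ) ∑_{(s',a') ∈ τ} ∇ log π_{θ*}(a'|s')`, while the gradient of the
demonstration loss is `(1/H) ∑_{(s,a) ∈ ξ} ∇ℓ(s,a;θ*)`. Pairing the two through `H_bc⁻¹` and
expanding bilinearly gives the double sum of action influences.
-/

section ListCalculus

variable {ι E F : Type*} [NormedAddCommGroup E] [NormedSpace ℝ E]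
  [NormedAddCommGroup F] [NormedSpace ℝ F]

theorem ContinuousLinearMap.list_sum_apply (l : List (E →L[ℝ] F)) (v : E) :
    l.sum v = (l.map (· v)).sum := by
  rw [← ContinuousLinearMap.apply_apply (𝕜 := ℝ) v, map_list_sum]
  rfl

theorem HasFDerivAt.list_sum_map {f : ι → E → F} {f' : ι → E →L[ℝ] F} {x : E} :
    ∀ {l : List ι}, (∀ i ∈ l, HasFDerivAt (f i) (f' i) x) →
      HasFDerivAt (fun y => (l.map (f · y)).sum) (l.map f').sum x
  | [], _ => by simpa using hasFDerivAt_const (0 : F) x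
  | i :: l, h => by
    simpa using (h i List.mem_cons_self).fun_add
      (HasFDerivAt.list_sum_map fun j hj => h j (List.mem_cons_of_mem i hj))

theorem HasFDerivAt.list_prod_map_eq_smul_sum_log {f : ι → E → ℝ} {x : E} :
    ∀ {l : List ι}, (∀ i ∈ l, DifferentiableAt ℝ (f i) x) → (∀ i ∈ l, f i x ≠ 0) →
      HasFDerivAt (fun y => (l.map (f · y)).prod)
        ((l.map (f · x)).prod • (l.map fun i => fderiv ℝ (fun y => Real.log (f i y)) x).sum) x
  | [], _, _ => by simpa using hasFDerivAt_const (1 : ℝ) x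
  | i :: l, hd, hne => by
    have hfi := (hd i List.mem_cons_self).hasFDerivAt
    have hprod := hfi.fun_mul (HasFDerivAt.list_prod_map_eq_smul_sum_log
      (fun j hj => hd j (List.mem_cons_of_mem i hj))
      (fun j hj => hne j (List.mem_cons_of_mem i hj)))
    have hfi_ne := hne i List.mem_cons_self
    simp only [List.map_cons, List.prod_cons, List.sum_cons, (hfi.log hfi_ne).fderiv]
    refine hprod.congr_fderiv ?_
    ext v
    simp
    field_simp
    ring

theorem hasFDerivAt_expectation_eq_sum_score {T : Type*} [Fintype T] {p : E → T → ℝ}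
    {c R : T → ℝ} {traj : T → List ι} {π : ι → E → ℝ} {x : E}
    (hp : ∀ θ τ, p θ τ = c τ * ((traj τ).map (π · θ)).prod)
    (hd : ∀ i, DifferentiableAt ℝ (π i) x) (hne : ∀ i, π i x ≠ 0) :
    HasFDerivAt (fun θ => ∑ τ, p θ τ * R τ)
      (∑ τ, (p x τ * R τ) •
        ((traj τ).map fun i => fderiv ℝ (fun θ => Real.log (π i θ)) x).sum) x := by
  refine HasFDerivAt.fun_sum fun τ _ => ?_
  simp only [hp]
  refine (((HasFDerivAt.list_prod_map_eq_smul_sum_log (fun i _ => hd i)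
    (fun i _ => hne i)).const_mul (c τ)).mul_const (R τ)).congr_fderiv ?_
  simp only [smul_smul]
  ring_nf

end ListCalculus

section Gradient

variable {ι F : Type*} [NormedAddCommGroup F] [InnerProductSpace ℝ F]

theorem inner_list_sum_map (a : F) (g : ι → F) (l : List ι) :
    ⟪a, (l.map g).sum⟫ = (l.map fun i => ⟪a, g i⟫).sum := by
  rw [← innerₛₗ_apply_apply (𝕜 := ℝ), map_list_sum, List.map_map]
  rfl

variable [CompleteSpace F]

theorem HasGradientAt.list_sum_map {f : ι → F → ℝ} {f' : ι → F} {x : F} {l : List ι}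
    (h : ∀ i ∈ l, HasGradientAt (f i) (f' i) x) :
    HasGradientAt (fun y => (l.map (f · y)).sum) (l.map f').sum x := by
  rw [hasGradientAt_iff_hasFDerivAt, map_list_sum, List.map_map]
  exact HasFDerivAt.list_sum_map fun i hi => hasGradientAt_iff_hasFDerivAt.mp (h i hi)

theorem HasGradientAt.const_mul {f : F → ℝ} {f' x : F} (h : HasGradientAt f f' x) (c : ℝ) :
    HasGradientAt (fun y => c * f y) (c • f') x := by
  rw [hasGradientAt_iff_hasFDerivAt, map_smul]
  exact (hasGradientAt_iff_hasFDerivAt.mp h).const_mul c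

end Gradient

theorem stmt_7_general {S A : Type} (d H : ℕ)
    (ξ : List (S × A))
    (ℓ : S → A → EuclideanSpace ℝ (Fin d) → ℝ) (hℓ : ∀ s a, ContDiff ℝ 2 (ℓ s a))
    (θs : EuclideanSpace ℝ (Fin d))
    (Hinv : EuclideanSpace ℝ (Fin d) →L[ℝ] EuclideanSpace ℝ (Fin d))
    {T : Type} [Fintype T] (R : T → ℝ) (sa : T → List (S × A))
    (π : EuclideanSpace ℝ (Fin d) → S → A → ℝ)
    (hπpos : ∀ s a, 0 < π θs s a)
    (hπdiff : ∀ s a, Differentiable ℝ (fun θ => π θ s a))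
    (c : T → ℝ)
    (p : EuclideanSpace ℝ (Fin d) → T → ℝ)
    (hp : ∀ θ τ, p θ τ = c τ * ((sa τ).map (fun pr => π θ pr.1 pr.2)).prod)
    (J : EuclideanSpace ℝ (Fin d) → ℝ) (hJ : J = fun θ => ∑ τ, p θ τ * R τ)
    (Ψa : (S × A) → (S × A) → ℝ)
    (hΨa : ∀ pr' pr, Ψa pr' pr =
      -⟪gradient (fun θ => Real.log (π θ pr'.1 pr'.2)) θs,
         Hinv (gradient (ℓ pr.1 pr.2) θs)⟫)
    (Ψπ : ℝ)
    (hΨπ : Ψπ = -⟪gradient J θs,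
      Hinv (gradient (fun θ => (1 / (H : ℝ)) * (ξ.map (fun pr => ℓ pr.1 pr.2 θ)).sum) θs)⟫) :
    Ψπ = ∑ τ, p θs τ *
      ((R τ / (H : ℝ)) * ((sa τ).map (fun pr' => (ξ.map (fun pr => Ψa pr' pr)).sum)).sum) := by
  have hgrad_demo : gradient (fun θ => (1 / (H : ℝ)) * (ξ.map (fun pr => ℓ pr.1 pr.2 θ)).sum) θs
      = (1 / (H : ℝ)) • (ξ.map fun pr => gradient (ℓ pr.1 pr.2) θs).sum :=
    ((HasGradientAt.list_sum_map fun pr _ =>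
      ((hℓ pr.1 pr.2).differentiable two_ne_zero θs).hasGradientAt).const_mul _).gradient
  have hscore : ∀ pr', fderiv ℝ (fun θ => Real.log (π θ pr'.1 pr'.2)) θs
      (Hinv (gradient (fun θ => (1 / (H : ℝ)) * (ξ.map (fun pr => ℓ pr.1 pr.2 θ)).sum) θs))
      = -(1 / (H : ℝ)) * (ξ.map fun pr => Ψa pr' pr).sum := by
    intro pr'
    have hΨa_sum : (ξ.map fun pr => Ψa pr' pr).sum
        = -⟪gradient (fun θ => Real.log (π θ pr'.1 pr'.2)) θs,
            Hinv (ξ.map fun pr => gradient (ℓ pr.1 pr.2) θs).sum⟫ := by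
      rw [map_list_sum, List.map_map, inner_list_sum_map, ← neg_one_mul,
        ← List.sum_map_mul_left]
      simp only [hΨa, Function.comp_apply, neg_one_mul]
    rw [hΨa_sum, ← inner_gradient_left, hgrad_demo, map_smul, inner_smul_right]
    ring
  have hJ_deriv := hasFDerivAt_expectation_eq_sum_score (R := R) hp
    (fun pr => hπdiff pr.1 pr.2 θs) (fun pr => (hπpos pr.1 pr.2).ne')
  rw [hΨπ, inner_gradient_left, hJ, hJ_deriv.fderiv]
  simp only [sum_apply, smul_apply, ContinuousLinearMap.list_sum_apply, List.map_map,
    Function.comp_def, hscore, List.sum_map_mul_left, ← Finset.sum_neg_distrib]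
  refine Finset.sum_congr rfl fun τ _ => ?_
  simp only [smul_eq_mul]
  ring

/-- CUPID's Proposition 3.1: the performance influence of a training demonstration `ξ`
(of length `H`, drawn from a dataset of `N` demonstrations, all of length `H`) on the
policy's expected return decomposes into the return-weighted sum, over rollout
trajectories and their transitions, of pairwise action influences between rollout
transitions and demonstration transitions. -/
theorem stmt_7 {S A : Type} (d N H : ℕ) (hHpos : 0 < H) (hNpos : 0 < N)
    (demo : Fin N → List (S × A)) (hlen : ∀ j, (demo j).length = H)
    (j₀ : Fin N) (ξ : List (S × A)) (hξ : ξ = demo j₀)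
    (ℓ : S → A → EuclideanSpace ℝ (Fin d) → ℝ) (hℓ : ∀ s a, ContDiff ℝ 2 (ℓ s a))
    (θs : EuclideanSpace ℝ (Fin d))
    (Lbc : EuclideanSpace ℝ (Fin d) → ℝ)
    (hLbc : Lbc = fun θ =>
      (1 / ((N : ℝ) * (H : ℝ))) * ∑ j, ((demo j).map (fun pr => ℓ pr.1 pr.2 θ)).sum)
    (hcrit : gradient Lbc θs = 0)
    (Hbc Hinv : EuclideanSpace ℝ (Fin d) →L[ℝ] EuclideanSpace ℝ (Fin d))
    (hHbc : Hbc = fderiv ℝ (gradient Lbc) θs)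
    (hpd : ∀ v, v ≠ 0 → 0 < ⟪v, Hbc v⟫)
    (hinv1 : Hinv.comp Hbc = ContinuousLinearMap.id ℝ (EuclideanSpace ℝ (Fin d)))
    (hinv2 : Hbc.comp Hinv = ContinuousLinearMap.id ℝ (EuclideanSpace ℝ (Fin d)))
    {T : Type} [Fintype T] (R : T → ℝ) (sa : T → List (S × A))
    (π : EuclideanSpace ℝ (Fin d) → S → A → ℝ)
    (hπpos : ∀ s a, 0 < π θs s a)
    (hπdiff : ∀ s a, Differentiable ℝ (fun θ => π θ s a))
    (c : T → ℝ)
    (p : EuclideanSpace ℝ (Fin d) → T → ℝ)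
    (hp : ∀ θ τ, p θ τ = c τ * ((sa τ).map (fun pr => π θ pr.1 pr.2)).prod)
    (hppos : ∀ τ, 0 < p θs τ)
    (hpsum : ∀ θ, ∑ τ, p θ τ = 1)
    (J : EuclideanSpace ℝ (Fin d) → ℝ) (hJ : J = fun θ => ∑ τ, p θ τ * R τ)
    (Ψa : (S × A) → (S × A) → ℝ)
    (hΨa : ∀ pr' pr, Ψa pr' pr =
      -⟪gradient (fun θ => Real.log (π θ pr'.1 pr'.2)) θs,
         Hinv (gradient (ℓ pr.1 pr.2) θs)⟫)
    (Ψπ : ℝ)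
    (hΨπ : Ψπ = -⟪gradient J θs,
      Hinv (gradient (fun θ => (1 / (H : ℝ)) * (ξ.map (fun pr => ℓ pr.1 pr.2 θ)).sum) θs)⟫) :
    Ψπ = ∑ τ, p θs τ *
      ((R τ / (H : ℝ)) * ((sa τ).map (fun pr' => (ξ.map (fun pr => Ψa pr' pr)).sum)).sum) :=
  stmt_7_general d H ξ ℓ hℓ θs Hinv R sa π hπpos hπdiff c p hp J hJ Ψa hΨa Ψπ hΨπ
end
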